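/- Lower semicontinuity of the quadratic-form functional with respect to the quadratic form: let ρ be a finite Borel measure on [0,T]×𝕋³, W an ℝ^d-valued Borel measure there, and let Q_n, Q ∈ C([0,T]×𝕋³, ℝ^{d×d}) be continuous uniformly positive definite symmetric matrix fields with ‖Q_n - Q‖_∞ → 0. Define Λ̃(ρ,W,Q) = sup{∫∫ a dρ + A·dW : (a,A) continuous, a + |Q^{-1/2}A|²/2 ≤ 0}. Then liminf_{n→∞} Λ̃(ρ,W,Q_n) ≥ Λ̃(ρ,W,Q). -/

import Mathlib

/-! Through `Q⁻¹ - Qₙ⁻¹ = Q⁻¹ (Qₙ - Q) Qₙ⁻¹`, the uniform coercivity constants `c, c'` bound the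
inverses, so `|Q⁻¹A·A - Qₙ⁻¹A·A| ≤ C ‖Qₙ - Q‖∞ ‖A‖² / (c c')` uniformly on the space. Hence an
admissible pair `(a, A)` for `Q` becomes admissible for `Qₙ` after lowering `a` by a constant
`δₙ → 0`, which lowers its value by `δₙ ρ(X)`; so each value for `Q` is a limit of lower bounds
for `Λ̃(ρ,W,Qₙ)`. -/
open MeasureTheory
noncomputable section

/-- The 3-torus `𝕋³ = ℝ³/ℤ³`. -/
abbrev T3 : Type := UnitAddCircle × UnitAddCircle × UnitAddCircle

/-- Pairing of a signed (Borel) measure with a function, `∫ f ds`. -/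
def pairSM {α : Type*} [MeasurableSpace α] (s : SignedMeasure α) (f : α → ℝ) : ℝ :=
  ∫ x, f x ∂s.toJordanDecomposition.posPart - ∫ x, f x ∂s.toJordanDecomposition.negPart

/-- The quadratic-form entropy functional
`Λ̃(ρ,W,Q) = sup { ∫ a dρ + ∫ A·dW : (a,A) continuous, a + |Q^{-1/2}A|²/2 ≤ 0 }`,
where the constraint is written equivalently as `a + (Q⁻¹A)·A/2 ≤ 0`. -/
def LamQ {X : Type*} [MeasurableSpace X] [TopologicalSpace X] {d : ℕ}
    (ρ : Measure X) (W : Fin d → SignedMeasure X) (Q : X → Matrix (Fin d) (Fin d) ℝ) : EReal :=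
  sSup { r : EReal | ∃ (a : C(X, ℝ)) (A : Fin d → C(X, ℝ)),
    (∀ p, a p + (dotProduct (Matrix.mulVec (Q p)⁻¹ (fun i => A i p)) (fun i => A i p)) / 2 ≤ 0) ∧
    r = ((∫ p, a p ∂ρ + ∑ i, pairSM (W i) ⇑(A i) : ℝ) : EReal) }

open Matrix Filter Topology

section Coercive

variable {n : Type*} [Fintype n]

-- `‖·‖` on `n → ℝ` is the sup norm, whence the factors `Fintype.card n` below.
def CoerciveWith (c : ℝ) (S : Matrix n n ℝ) : Prop :=
  ∀ x : n → ℝ, c * (x ⬝ᵥ x) ≤ S *ᵥ x ⬝ᵥ x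

lemma abs_dotProduct_le (u v : n → ℝ) : |u ⬝ᵥ v| ≤ Fintype.card n * (‖u‖ * ‖v‖) :=
  calc |u ⬝ᵥ v| ≤ ∑ i, |u i * v i| := Finset.abs_sum_le_sum_abs _ _
    _ ≤ ∑ _i : n, ‖u‖ * ‖v‖ := Finset.sum_le_sum fun i _ => by
        rw [abs_mul]
        exact mul_le_mul (norm_le_pi_norm u i) (norm_le_pi_norm v i) (abs_nonneg _) (norm_nonneg _)
    _ = Fintype.card n * (‖u‖ * ‖v‖) := by simp

lemma sq_norm_le_dotProduct_self (x : n → ℝ) : ‖x‖ ^ 2 ≤ x ⬝ᵥ x := by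
  have hx : ‖x‖ ≤ √(x ⬝ᵥ x) := (pi_norm_le_iff_of_nonneg (Real.sqrt_nonneg _)).2 fun i =>
    Real.abs_le_sqrt (by
      rw [sq]
      exact Finset.single_le_sum (f := fun j => x j * x j) (fun j _ => mul_self_nonneg (x j))
        (Finset.mem_univ i))
  calc ‖x‖ ^ 2 ≤ √(x ⬝ᵥ x) ^ 2 := by gcongr
    _ = x ⬝ᵥ x := Real.sq_sqrt (Finset.sum_nonneg fun j _ => mul_self_nonneg (x j))

lemma norm_mulVec_le_of_abs_le {m : Type*} [Fintype m] {M : Matrix m n ℝ} {ε : ℝ} (hε : 0 ≤ ε)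
    (hM : ∀ i j, |M i j| ≤ ε) (v : n → ℝ) : ‖M *ᵥ v‖ ≤ Fintype.card n * ε * ‖v‖ := by
  refine (pi_norm_le_iff_of_nonneg (by positivity)).2 fun i => ?_
  calc ‖(M *ᵥ v) i‖ ≤ ∑ j, |M i j * v j| := Finset.abs_sum_le_sum_abs _ _
    _ ≤ ∑ _j : n, ε * ‖v‖ := Finset.sum_le_sum fun j _ => by
        rw [abs_mul]
        exact mul_le_mul (hM i j) (norm_le_pi_norm v j) (abs_nonneg _) hε
    _ = Fintype.card n * ε * ‖v‖ := by simp [mul_assoc]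

variable {c : ℝ} {S : Matrix n n ℝ}

lemma CoerciveWith.norm_le (hc : 0 < c) (hS : CoerciveWith c S) (y : n → ℝ) :
    ‖y‖ ≤ Fintype.card n / c * ‖S *ᵥ y‖ := by
  have key : c * ‖y‖ ^ 2 ≤ Fintype.card n * (‖S *ᵥ y‖ * ‖y‖) :=
    calc c * ‖y‖ ^ 2 ≤ c * (y ⬝ᵥ y) := by gcongr; exact sq_norm_le_dotProduct_self y
      _ ≤ S *ᵥ y ⬝ᵥ y := hS y
      _ ≤ Fintype.card n * (‖S *ᵥ y‖ * ‖y‖) := (le_abs_self _).trans (abs_dotProduct_le _ _)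
  rcases (norm_nonneg y).eq_or_lt with hy | hy
  · rw [← hy]; positivity
  · rw [div_mul_eq_mul_div, le_div_iff₀ hc]
    nlinarith

lemma CoerciveWith.isUnit [DecidableEq n] (hc : 0 < c) (hS : CoerciveWith c S) : IsUnit S := by
  refine mulVec_injective_iff_isUnit.mp fun x y hxy => sub_eq_zero.mp (norm_le_zero_iff.mp ?_)
  simpa [mulVec_sub, hxy] using hS.norm_le hc (x - y)

lemma CoerciveWith.norm_inv_mulVec_le [DecidableEq n] (hc : 0 < c) (hS : CoerciveWith c S)
    (x : n → ℝ) : ‖S⁻¹ *ᵥ x‖ ≤ Fintype.card n / c * ‖x‖ := by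
  simpa [mulVec_mulVec, mul_nonsing_inv _ ((isUnit_iff_isUnit_det S).mp (hS.isUnit hc))]
    using hS.norm_le hc (S⁻¹ *ᵥ x)

lemma abs_inv_quadForm_sub_le [DecidableEq n] {c' ε : ℝ} {S' : Matrix n n ℝ}
    (hc : 0 < c) (hS : CoerciveWith c S) (hc' : 0 < c') (hS' : CoerciveWith c' S')
    (hε : 0 ≤ ε) (hSS' : ∀ i j, |S' i j - S i j| ≤ ε) (x : n → ℝ) :
    |S⁻¹ *ᵥ x ⬝ᵥ x - S'⁻¹ *ᵥ x ⬝ᵥ x| ≤ Fintype.card n ^ 4 / (c * c') * ε * ‖x‖ ^ 2 := by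
  have hdiff : S⁻¹ *ᵥ x - S'⁻¹ *ᵥ x = S⁻¹ *ᵥ ((S' - S) *ᵥ (S'⁻¹ *ᵥ x)) := by
    rw [← sub_mulVec, Matrix.inv_sub_inv (iff_of_true (hS.isUnit hc) (hS'.isUnit hc')),
      mulVec_mulVec, mulVec_mulVec]
  have hnorm : ‖S⁻¹ *ᵥ x - S'⁻¹ *ᵥ x‖ ≤
      Fintype.card n / c * (Fintype.card n * ε * (Fintype.card n / c' * ‖x‖)) := by
    rw [hdiff]
    calc ‖S⁻¹ *ᵥ ((S' - S) *ᵥ (S'⁻¹ *ᵥ x))‖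
        ≤ Fintype.card n / c * ‖(S' - S) *ᵥ (S'⁻¹ *ᵥ x)‖ := hS.norm_inv_mulVec_le hc _
      _ ≤ Fintype.card n / c * (Fintype.card n * ε * ‖S'⁻¹ *ᵥ x‖) := by
        gcongr; exact norm_mulVec_le_of_abs_le hε hSS' _
      _ ≤ Fintype.card n / c * (Fintype.card n * ε * (Fintype.card n / c' * ‖x‖)) := by
        gcongr; exact hS'.norm_inv_mulVec_le hc' x
  calc |S⁻¹ *ᵥ x ⬝ᵥ x - S'⁻¹ *ᵥ x ⬝ᵥ x|
      = |(S⁻¹ *ᵥ x - S'⁻¹ *ᵥ x) ⬝ᵥ x| := by rw [sub_dotProduct]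
    _ ≤ Fintype.card n * (‖S⁻¹ *ᵥ x - S'⁻¹ *ᵥ x‖ * ‖x‖) := abs_dotProduct_le _ _
    _ ≤ Fintype.card n *
        (Fintype.card n / c * (Fintype.card n * ε * (Fintype.card n / c' * ‖x‖)) * ‖x‖) := by
      gcongr
    _ = Fintype.card n ^ 4 / (c * c') * ε * ‖x‖ ^ 2 := by field_simp

end Coercive

lemma coe_le_liminf_of_forall_pos {ι : Type*} {l : Filter ι} {f : ι → EReal} {v K : ℝ}
    (h : ∀ η > 0, ∀ᶠ i in l, ((v - η * K : ℝ) : EReal) ≤ f i) :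
    (v : EReal) ≤ liminf f l := by
  have hlim : Tendsto (fun η : ℝ => ((v - η * K : ℝ) : EReal)) (𝓝[>] 0) (𝓝 (v : EReal)) :=
    (continuous_coe_real_ereal.tendsto' _ _ (by simp)).comp
      ((Continuous.tendsto (by fun_prop) 0).mono_left nhdsWithin_le_nhds)
  exact le_of_tendsto hlim (eventually_mem_nhdsWithin.mono fun η hη =>
    le_liminf_of_le (by isBoundedDefault) (h η hη))

section LamQ

variable {X : Type*} [MeasurableSpace X] [TopologicalSpace X] {d : ℕ}

lemma coe_sub_le_lamQ [CompactSpace X] [OpensMeasurableSpace X] (ρ : Measure X)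
    [IsFiniteMeasure ρ] (W : Fin d → SignedMeasure X) {Q Q' : X → Matrix (Fin d) (Fin d) ℝ}
    (a : C(X, ℝ)) (A : Fin d → C(X, ℝ))
    (hadm : ∀ p, a p + (Q p)⁻¹ *ᵥ (fun i => A i p) ⬝ᵥ (fun i => A i p) / 2 ≤ 0) {δ : ℝ}
    (hQQ' : ∀ p, (Q' p)⁻¹ *ᵥ (fun i => A i p) ⬝ᵥ (fun i => A i p) ≤
      (Q p)⁻¹ *ᵥ (fun i => A i p) ⬝ᵥ (fun i => A i p) + 2 * δ) :
    ((∫ p, a p ∂ρ + ∑ i, pairSM (W i) (A i) - δ * ρ.real Set.univ : ℝ) : EReal) ≤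
      LamQ ρ W Q' := by
  refine le_sSup ⟨a - ContinuousMap.const X δ, A, fun p => ?_, ?_⟩
  · simp only [ContinuousMap.sub_apply, ContinuousMap.const_apply]
    linarith [hadm p, hQQ' p]
  · have ha : Integrable a ρ :=
      a.continuous.integrable_of_hasCompactSupport (HasCompactSupport.of_compactSpace _)
    simp only [ContinuousMap.coe_sub, ContinuousMap.coe_const, Pi.sub_apply, Function.const_apply]
    rw [integral_sub ha (integrable_const δ), integral_const, smul_eq_mul]
    ring_nf

end LamQ

theorem lamQ_lsc_in_Q_general (T : ℝ) (d : ℕ)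
    (ρ : Measure (Set.Icc (0:ℝ) T × T3)) [IsFiniteMeasure ρ]
    (W : Fin d → SignedMeasure (Set.Icc (0:ℝ) T × T3))
    (Q : Set.Icc (0:ℝ) T × T3 → Matrix (Fin d) (Fin d) ℝ)
    (Qn : ℕ → Set.Icc (0:ℝ) T × T3 → Matrix (Fin d) (Fin d) ℝ)
    (hQunif : ∃ c > 0, ∀ p (x : Fin d → ℝ),
      c * dotProduct x x ≤ dotProduct (Matrix.mulVec (Q p) x) x)
    (hQnunif : ∃ c > 0, ∀ n p (x : Fin d → ℝ),
      c * dotProduct x x ≤ dotProduct (Matrix.mulVec (Qn n p) x) x)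
    (hconv : ∀ ε > 0, ∃ N : ℕ, ∀ n ≥ N, ∀ p i j, |Qn n p i j - Q p i j| < ε) :
    LamQ ρ W Q ≤ Filter.liminf (fun n => LamQ ρ W (Qn n)) Filter.atTop := by
  obtain ⟨c, hc, hQ⟩ := hQunif
  obtain ⟨c', hc', hQn⟩ := hQnunif
  refine sSup_le ?_
  rintro _ ⟨a, A, hadm, rfl⟩
  set M := ‖ContinuousMap.pi A‖
  set K := (d : ℝ) ^ 4 / (c * c') * M ^ 2 / 2
  refine coe_le_liminf_of_forall_pos (K := K * ρ.real Set.univ) fun η hη => ?_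
  obtain ⟨N, hN⟩ := hconv η hη
  filter_upwards [eventually_ge_atTop N] with n hn
  rw [← mul_assoc]
  refine coe_sub_le_lamQ ρ W a A hadm fun p => ?_
  have hA : ‖fun i => A i p‖ ≤ M := (ContinuousMap.pi A).norm_coe_le_norm p
  have hq := abs_inv_quadForm_sub_le hc (hQ p) hc' (hQn n p) hη.le (fun i j => (hN n hn p i j).le)
    (fun i => A i p)
  rw [Fintype.card_fin] at hq
  have hgap : (d : ℝ) ^ 4 / (c * c') * η * ‖fun i => A i p‖ ^ 2 ≤ 2 * (η * K) :=
    calc (d : ℝ) ^ 4 / (c * c') * η * ‖fun i => A i p‖ ^ 2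
        ≤ (d : ℝ) ^ 4 / (c * c') * η * M ^ 2 := by gcongr
      _ = 2 * (η * K) := by ring
  linarith [(abs_le.mp (hq.trans hgap)).1]

/-- lower semicontinuity of the quadratic-form functional with
respect to the quadratic form: on `[0,T]×𝕋³`, for a finite Borel measure `ρ`, an
`ℝ^d`-valued Borel measure `W`, and continuous uniformly positive definite
symmetric matrix fields `Qₙ → Q` uniformly, one has
`liminf Λ̃(ρ,W,Qₙ) ≥ Λ̃(ρ,W,Q)`. -/
theorem lamQ_lsc_in_Q (T : ℝ) (hT : 0 < T) (d : ℕ)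
    (ρ : Measure (Set.Icc (0:ℝ) T × T3)) [IsFiniteMeasure ρ]
    (W : Fin d → SignedMeasure (Set.Icc (0:ℝ) T × T3))
    (Q : Set.Icc (0:ℝ) T × T3 → Matrix (Fin d) (Fin d) ℝ)
    (Qn : ℕ → Set.Icc (0:ℝ) T × T3 → Matrix (Fin d) (Fin d) ℝ)
    (hQc : Continuous Q) (hQnc : ∀ n, Continuous (Qn n))
    (hQsymm : ∀ p, (Q p).IsSymm) (hQnsymm : ∀ n p, (Qn n p).IsSymm)
    (hQunif : ∃ c > 0, ∀ p (x : Fin d → ℝ),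
      c * dotProduct x x ≤ dotProduct (Matrix.mulVec (Q p) x) x)
    (hQnunif : ∃ c > 0, ∀ n p (x : Fin d → ℝ),
      c * dotProduct x x ≤ dotProduct (Matrix.mulVec (Qn n p) x) x)
    (hconv : ∀ ε > 0, ∃ N : ℕ, ∀ n ≥ N, ∀ p i j, |Qn n p i j - Q p i j| < ε) :
    LamQ ρ W Q ≤ Filter.liminf (fun n => LamQ ρ W (Qn n)) Filter.atTop :=
  lamQ_lsc_in_Q_general T d ρ W Q Qn hQunif hQnunif hconv
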